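/- arXiv:2110.00671 — 5 statements merged into one kernel-verified Lean document; each statement's English description precedes it below -/
import Mathlib

section
/- Let P ⊆ ℝ² be finite with no three points collinear and let k ≥ 2 be an integer. Let ε* := min{ cost(Q,P) : Q ⊆ P, Q ≠ ∅, |Q| ≤ k }, and assume cost({q},P) > ε* for every q ∈ P. Then the optimal value is an edge weight of the graph G_P: there exist distinct a, b ∈ P such that ε* = w(a,b). -/
open Set Metric

noncomputable abbrev Pt := EuclideanSpace ℝ (Fin 2)

/-- The planar determinant `det(u,v) = u₁·v₂ − u₂·v₁`. -/
def detv (u v : Pt) : ℝ := u 0 * v 1 - u 1 * v 0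

/-- `cost Q P` is the maximum (as a supremum) over `p ∈ P` of the distance from `p`
to the convex hull of `Q`. -/
noncomputable def cost (Q P : Set Pt) : ℝ :=
  sSup ((fun p => Metric.infDist p (convexHull ℝ Q)) '' P)

/-- `wgt P a b` : the maximum distance to the segment `[a, b]` among the points of `P`
lying in the closed halfplane to the left of the directed line from `a` to `b`. -/
noncomputable def wgt (P : Set Pt) (a b : Pt) : ℝ :=
  sSup ((fun q => Metric.infDist q (segment ℝ a b)) ''
    (P ∩ {x : Pt | 0 ≤ detv (b - a) (x - a)}))

/-!
Fix an optimal `Q` (cost `ε`, at most `k` points) whose hull covers as many points of `P` as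
possible. Then no vertex `v` of `Q` lies in the hull of `(Q \ {v}) ∪ {q}` for a point `q ∈ P`
outside `conv Q`: swapping `v` for `q` would keep the cost and cover `q` as well.

Let `AB` be an edge of `conv Q`, oriented with `Q` on its right, and `q ∈ P` a point on its left
with `dist(q, [A, B]) > ε`. Then `q ∉ conv Q`, and as the nearest point `y` of `conv Q` to `q`
lies across the line `AB`, the foot of `q` on that line falls outside `[A, B]`, say behind `A`.
Then `y` lies behind `A` as well, hence so does some vertex `c` of `Q`, and `A` lies in the
triangle `q B c`, which the exchange property forbids. So `w(A, B) ≤ ε`. Equality holds for the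
edge through the nearest point of `conv Q` to a point of `P` at distance `ε` (any edge if
`ε = 0`), since that point lies on its left.
-/

open RealInnerProductSpace

section Planar

lemma real_inner_eq_coords (x y : Pt) : ⟪x, y⟫ = x 0 * y 0 + x 1 * y 1 := by
  simp [PiLp.inner_apply, Fin.sum_univ_two]
  ring

lemma detv_comm (u v : Pt) : detv u v = -detv v u := by
  simp only [detv]; ring

lemma detv_self (u : Pt) : detv u u = 0 := by
  simp only [detv]; ring

lemma detv_add_right (u v w : Pt) : detv u (v + w) = detv u v + detv u w := by
  simp only [detv, PiLp.add_apply]; ring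

lemma detv_smul_right (u v : Pt) (c : ℝ) : detv u (c • v) = c * detv u v := by
  simp only [detv, PiLp.smul_apply, smul_eq_mul]; ring

lemma detv_sub_right (u v w : Pt) : detv u (v - w) = detv u v - detv u w := by
  simp only [detv, PiLp.sub_apply]; ring

lemma detv_sub_sub_swap (a b z : Pt) : detv (a - b) (z - b) = -detv (b - a) (z - a) := by
  simp only [detv, PiLp.sub_apply]; ring

def detvRight (d : Pt) : Pt →ₗ[ℝ] ℝ where
  toFun := detv d
  map_add' := detv_add_right d
  map_smul' c v := detv_smul_right d v c

@[simp] lemma detvRight_apply (d v : Pt) : detvRight d v = detv d v := rfl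

lemma detv_mul_inner_eq (u v w h : Pt) :
    detv u w * ⟪h, v⟫ = detv u v * ⟪h, w⟫ + detv v w * ⟪h, u⟫ := by
  simp only [detv, real_inner_eq_coords]; ring

lemma inner_mul_inner_self_eq (w z d : Pt) :
    ⟪w, z⟫ * ⟪d, d⟫ = ⟪d, w⟫ * ⟪d, z⟫ + detv d w * detv d z := by
  simp only [detv, real_inner_eq_coords]; ring

lemma inner_self_smul_eq_of_detv_eq_zero {d w : Pt} (h : detv d w = 0) :
    ⟪d, d⟫ • w = ⟪w, d⟫ • d := by
  simp only [detv] at h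
  ext i
  fin_cases i
  all_goals simp only [real_inner_eq_coords, PiLp.smul_apply, smul_eq_mul, Fin.zero_eta,
    Fin.mk_one, Fin.isValue]
  · linear_combination (-d 1) * h
  · linear_combination d 0 * h

lemma collinear_of_detv_eq_zero {a b c : Pt} (h : detv (b - a) (c - a) = 0) :
    Collinear ℝ ({a, b, c} : Set Pt) := by
  rcases eq_or_ne b a with rfl | hab
  · simpa using collinear_pair ℝ b c
  have hd : ⟪b - a, b - a⟫ ≠ 0 := inner_self_ne_zero.2 (sub_ne_zero.2 hab)
  have hc : c - a = (⟪c - a, b - a⟫ / ⟪b - a, b - a⟫) • (b - a) := by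
    rw [div_eq_inv_mul, mul_smul, ← inner_self_smul_eq_of_detv_eq_zero h, inv_smul_smul₀ hd]
  rw [collinear_iff_of_mem (p₀ := a) (by simp)]
  refine ⟨b - a, ?_⟩
  rintro p (rfl | rfl | rfl)
  · exact ⟨0, by simp⟩
  · exact ⟨1, by simp⟩
  · exact ⟨_, by rw [vadd_eq_add, ← hc, sub_add_cancel]⟩

lemma detv_sub_comm (a b u : Pt) : detv (a - b) u = -detv (b - a) u := by
  simp only [detv, PiLp.sub_apply]; ring

lemma detv_sub_eq_zero_of_mem_segment {a b x : Pt} (hx : x ∈ segment ℝ a b) :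
    detv (b - a) (x - a) = 0 := by
  rw [segment_eq_image'] at hx
  obtain ⟨t, -, rfl⟩ := hx
  rw [add_sub_cancel_left, detv_smul_right, detv_self, mul_zero]

lemma mem_convexHull_triple_of_detv_nonneg {z p₁ p₂ p₃ : Pt}
    (h₁ : 0 ≤ detv (p₂ - z) (p₃ - z)) (h₂ : 0 ≤ detv (p₃ - z) (p₁ - z))
    (h₃ : 0 ≤ detv (p₁ - z) (p₂ - z))
    (hpos : 0 < detv (p₂ - z) (p₃ - z) + detv (p₃ - z) (p₁ - z) + detv (p₁ - z) (p₂ - z)) :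
    z ∈ convexHull ℝ {p₁, p₂, p₃} := by
  set w : Fin 3 → ℝ := ![detv (p₂ - z) (p₃ - z), detv (p₃ - z) (p₁ - z), detv (p₁ - z) (p₂ - z)]
  have hsum : ∑ i, w i =
      detv (p₂ - z) (p₃ - z) + detv (p₃ - z) (p₁ - z) + detv (p₁ - z) (p₂ - z) := by
    simp [w, Fin.sum_univ_three]
  have hz : Finset.univ.centerMass w ![p₁, p₂, p₃] = z := by
    rw [Finset.centerMass, hsum, inv_smul_eq_iff₀ hpos.ne']
    ext i
    fin_cases i <;>
      simp [w, Fin.sum_univ_three, detv] <;> ring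
  rw [← hz]
  refine Finset.centerMass_mem_convexHull _ (fun i _ => ?_) (by rwa [hsum]) (fun i _ => ?_)
  · fin_cases i <;> assumption
  · fin_cases i <;> simp

lemma mem_convexHull_of_inner_neg {A B q c : Pt} (hq : ⟪B - A, q - A⟫ < 0)
    (hc : ⟪B - A, c - A⟫ < 0) (hside : detv (B - A) (q - A) * detv (B - A) (c - A) ≤ 0)
    (hc₀ : detv (B - A) (c - A) ≠ 0) :
    A ∈ convexHull ℝ {q, B, c} := by
  have hd : 0 < ⟪B - A, B - A⟫ := real_inner_self_pos.2 fun h => by simp [h] at hq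
  have key := detv_mul_inner_eq (c - A) (B - A) (q - A) (B - A)
  rw [detv_comm (c - A) (B - A)] at key
  have hqB := detv_comm (q - A) (B - A)
  rcases hc₀.lt_or_gt with hneg | hpos
  · have hq' : 0 ≤ detv (B - A) (q - A) := nonneg_of_mul_nonpos_left hside hneg
    rw [Set.pair_comm]
    apply mem_convexHull_triple_of_detv_nonneg <;>
      nlinarith [detv_comm (c - A) (B - A), detv_comm (q - A) (c - A)]
  · have hq' : detv (B - A) (q - A) ≤ 0 := nonpos_of_mul_nonpos_left hside hpos
    apply mem_convexHull_triple_of_detv_nonneg <;> nlinarith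

lemma exists_mem_segment_dist_le {A B q y : Pt} (hAB : A ≠ B) (hA : 0 ≤ ⟪B - A, q - A⟫)
    (hB : 0 ≤ ⟪A - B, q - B⟫) (hside : detv (B - A) (q - A) * detv (B - A) (y - A) ≤ 0) :
    ∃ z ∈ segment ℝ A B, dist q z ≤ dist q y := by
  set d := B - A
  have hd : 0 < ⟪d, d⟫ := real_inner_self_pos.2 (sub_ne_zero.2 hAB.symm)
  have hB' : ⟪d, q - A⟫ ≤ ⟪d, d⟫ := by
    rw [show A - B = -d by simp [d], show q - B = (q - A) - d by simp [d], inner_neg_left,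
      inner_sub_right] at hB
    linarith
  -- `z` is the foot of the perpendicular from `q` to the line `AB`.
  set t := ⟪d, q - A⟫ / ⟪d, d⟫
  refine ⟨A + t • d, ?_, ?_⟩
  · rw [segment_eq_image']
    exact ⟨t, ⟨div_nonneg hA hd.le, (div_le_one hd).2 hB'⟩, rfl⟩
  have hqz : q - (A + t • d) = (q - A) - t • d := by abel
  have hqy : q - y = (q - A) - (y - A) := by abel
  have hfoot := inner_mul_inner_self_eq (q - (A + t • d)) (q - (A + t • d)) d
  have hfar := inner_mul_inner_self_eq (q - y) (q - y) d
  have h₀ : ⟪d, q - A - t • d⟫ = 0 := by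
    rw [inner_sub_right, real_inner_smul_right, div_mul_cancel₀ _ hd.ne', sub_self]
  have h₁ : detv d (q - A - t • d) = detv d (q - A) := by
    rw [detv_sub_right, detv_smul_right, detv_self, mul_zero, sub_zero]
  rw [hqz, h₀, h₁, zero_mul, zero_add] at hfoot
  rw [hqy, detv_sub_right] at hfar
  rw [dist_eq_norm, dist_eq_norm, ← sq_le_sq₀ (norm_nonneg _) (norm_nonneg _),
    ← real_inner_self_eq_norm_sq, ← real_inner_self_eq_norm_sq, hqz, hqy]
  refine le_of_mul_le_mul_right ?_ hd
  rw [hfoot, hfar]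
  nlinarith [mul_self_nonneg ⟪d, q - A - (y - A)⟫, mul_self_nonneg (detv d (y - A))]

end Planar

def NoThreeCollinear {E : Type*} [AddCommGroup E] [Module ℝ E] (X : Set E) : Prop :=
  ∀ x ∈ X, ∀ y ∈ X, ∀ z ∈ X, x ≠ y → x ≠ z → y ≠ z → ¬ Collinear ℝ ({x, y, z} : Set E)

lemma NoThreeCollinear.mono {E : Type*} [AddCommGroup E] [Module ℝ E] {X Y : Set E}
    (h : NoThreeCollinear Y) (hXY : X ⊆ Y) : NoThreeCollinear X :=
  fun x hx y hy z hz => h x (hXY hx) y (hXY hy) z (hXY hz)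

lemma NoThreeCollinear.eq_or_eq_of_detv_eq_zero {X : Set Pt} (h : NoThreeCollinear X)
    {a b c : Pt} (ha : a ∈ X) (hb : b ∈ X) (hc : c ∈ X) (hab : a ≠ b)
    (hdet : detv (b - a) (c - a) = 0) : c = a ∨ c = b := by
  by_contra! hne
  exact h a ha b hb c hc hab hne.1.symm hne.2.symm (collinear_of_detv_eq_zero hdet)

lemma mem_convexHull_inter_of_apply_eq {E : Type*} [AddCommGroup E] [Module ℝ E]
    (f : E →ₗ[ℝ] ℝ) {X : Set E} {c : ℝ} (hX : ∀ v ∈ X, f v ≤ c) {z : E}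
    (hz : z ∈ convexHull ℝ X) (hzc : f z = c) :
    z ∈ convexHull ℝ (X ∩ {v | f v = c}) := by
  set F := convexHull ℝ (X ∩ {v | f v = c})
  have hF : ∀ w ∈ F, f w = c := fun w hw =>
    convexHull_min inter_subset_right (convex_hyperplane f.isLinear c) hw
  -- Points of `X` off the face lie in the open halfspace `f < c`, which absorbs segments.
  have hT : Convex ℝ ({w | f w < c} ∪ F) := by
    refine convex_iff_forall_pos.2 fun x hx y hy a b ha hb hab => ?_
    have hc : a * c + b * c = c := by rw [← add_mul, hab, one_mul]
    rcases hx with (hx : f x < c) | hx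
    · left
      show f (a • x + b • y) < c
      rcases hy with (hy : f y < c) | hy
      all_goals simp only [map_add, map_smul, smul_eq_mul]
      · linarith [mul_lt_mul_of_pos_left hx ha, mul_lt_mul_of_pos_left hy hb]
      · rw [hF y hy]; linarith [mul_lt_mul_of_pos_left hx ha]
    rcases hy with (hy : f y < c) | hy
    · left
      show f (a • x + b • y) < c
      simp only [map_add, map_smul, smul_eq_mul]
      rw [hF x hx]; linarith [mul_lt_mul_of_pos_left hy hb]
    · exact Or.inr (convex_convexHull ℝ _ hx hy ha.le hb.le hab)
  have hXT : X ⊆ {w | f w < c} ∪ F := fun v hv =>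
    (hX v hv).lt_or_eq.imp id fun h => subset_convexHull ℝ _ ⟨hv, h⟩
  exact (convexHull_min hXT hT hz).resolve_left (by simp [hzc])

lemma inner_sub_nonpos_of_infDist_eq {F : Type*} [NormedAddCommGroup F] [InnerProductSpace ℝ F]
    {K : Set F} (hK : Convex ℝ K) {p x : F} (hx : x ∈ K) (h : infDist p K = dist p x) :
    ∀ w ∈ K, ⟪p - x, w - x⟫ ≤ 0 := by
  refine (norm_eq_iInf_iff_real_inner_le_zero hK hx).1 ?_
  rw [← dist_eq_norm, ← h, infDist_eq_iInf]
  simp only [dist_eq_norm]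

def IsHullEdge (Q : Set Pt) (A B : Pt) : Prop :=
  A ∈ Q ∧ B ∈ Q ∧ A ≠ B ∧ ∀ v ∈ Q, detv (B - A) (v - A) ≤ 0

lemma detv_nonpos_of_slope_le {u w w' : Pt} (hw : ⟪u, w⟫ < 0) (hw' : ⟪u, w'⟫ < 0)
    (h : detv u w' / ⟪u, w'⟫ ≤ detv u w / ⟪u, w⟫) : detv w w' ≤ 0 := by
  have hu : 0 < ⟪u, u⟫ := real_inner_self_pos.2 fun hu => by simp [hu] at hw
  have key := detv_mul_inner_eq w u w' u
  rw [detv_comm w u,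
    ← div_mul_cancel₀ (detv u w) hw.ne, ← div_mul_cancel₀ (detv u w') hw'.ne] at key
  nlinarith [mul_nonpos_of_nonneg_of_nonpos (mul_pos_of_neg_of_neg hw hw').le (sub_nonpos.2 h)]

lemma exists_isHullEdge_of_vertex {Q : Set Pt} (hQ : Q.Finite) (hQnt : Q.Nontrivial)
    {a u : Pt} (ha : a ∈ Q) (hu : ∀ v ∈ Q, v ≠ a → ⟪u, v - a⟫ < 0) :
    ∃ A B, IsHullEdge Q A B ∧ a ∈ segment ℝ A B ∧ 0 ≤ detv (B - A) u := by
  have hX : (Q \ {a}).Nonempty := hQnt.exists_ne a |>.imp fun v hv => ⟨hv.1, hv.2⟩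
  have hu' : ∀ v ∈ Q \ {a}, ⟪u, v - a⟫ < 0 := fun v hv => hu v hv.1 hv.2
  -- The edges at `a` are the directions of extreme slope, seen from the outer normal `u`.
  set σ : Pt → ℝ := fun v => detv u (v - a) / ⟪u, v - a⟫
  obtain ⟨r, hr, hrmax⟩ := Set.exists_max_image _ σ (hQ.subset sdiff_subset) hX
  obtain ⟨l, hl, hlmin⟩ := Set.exists_min_image _ σ (hQ.subset sdiff_subset) hX
  have hslope : ∀ v ∈ Q \ {a}, ∀ w ∈ Q \ {a}, σ v ≤ σ w → detv (w - a) (v - a) ≤ 0 :=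
    fun v hv w hw h => detv_nonpos_of_slope_le (hu' w hw) (hu' v hv) h
  have hσ : ∀ v ∈ Q \ {a}, detv (v - a) u = -σ v * ⟪u, v - a⟫ := fun v hv => by
    rw [detv_comm, neg_mul, div_mul_cancel₀ _ (hu' v hv).ne]
  by_cases hr₀ : 0 ≤ σ r
  · refine ⟨a, r, ⟨ha, hr.1, Ne.symm hr.2, fun v hv => ?_⟩, left_mem_segment ℝ a r, ?_⟩
    · rcases eq_or_ne v a with rfl | hva
      · simp [detv]
      · exact hslope v ⟨hv, hva⟩ r hr (hrmax v ⟨hv, hva⟩)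
    · rw [hσ r hr]; nlinarith [hu' r hr]
  · refine ⟨l, a, ⟨hl.1, ha, hl.2, fun v hv => ?_⟩, right_mem_segment ℝ l a, ?_⟩
    · rcases eq_or_ne v a with rfl | hva
      · rw [detv_self]
      · rw [show detv (a - l) (v - l) = detv (v - a) (l - a) by
          simp only [detv, PiLp.sub_apply]; ring]
        exact hslope l hl v ⟨hv, hva⟩ (hlmin v ⟨hv, hva⟩)
    · rw [detv_sub_comm, hσ l hl]
      nlinarith [hu' l hl, hlmin r hr]

lemma isHullEdge_of_inner_eq {Q : Set Pt} {a b u : Pt} (ha : a ∈ Q) (hb : b ∈ Q) (hab : a ≠ b)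
    (hu : ∀ v ∈ Q, ⟪u, v⟫ ≤ ⟪u, a⟫) (hba : ⟪u, b⟫ = ⟪u, a⟫) (hdet : 0 < detv (b - a) u) :
    IsHullEdge Q a b := by
  refine ⟨ha, hb, hab, fun v hv => ?_⟩
  have hu₀ : 0 < ⟪u, u⟫ := real_inner_self_pos.2 fun h => by simp [h, detv] at hdet
  have key := detv_mul_inner_eq (b - a) u (v - a) u
  rw [inner_sub_right, inner_sub_right, hba, sub_self, mul_zero, add_zero] at key
  nlinarith [hu v hv]

lemma exists_isHullEdge_of_supporting {Q : Set Pt} (hQ : Q.Finite) (hQnt : Q.Nontrivial)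
    (hgen : NoThreeCollinear Q) {x u : Pt} (hx : x ∈ convexHull ℝ Q) (hu : u ≠ 0)
    (hsupp : ∀ v ∈ Q, ⟪u, v⟫ ≤ ⟪u, x⟫) :
    ∃ A B, IsHullEdge Q A B ∧ x ∈ segment ℝ A B ∧ 0 ≤ detv (B - A) u := by
  set L := Q ∩ {v | innerₗ Pt u v = ⟪u, x⟫}
  have hxL : x ∈ convexHull ℝ L := mem_convexHull_inter_of_apply_eq _ hsupp hx rfl
  obtain ⟨a, haQ, hax : ⟪u, a⟫ = ⟪u, x⟫⟩ : L.Nonempty := convexHull_nonempty_iff.1 ⟨x, hxL⟩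
  rw [← hax] at hsupp
  have hu₀ : 0 < ⟪u, u⟫ := real_inner_self_pos.2 hu
  by_cases hpair : ∃ b ∈ L, b ≠ a
  · obtain ⟨b, ⟨hbQ, hbx : ⟪u, b⟫ = ⟪u, x⟫⟩, hba⟩ := hpair
    rw [← hax] at hbx
    -- The face `L` lies on a line orthogonal to `u`, so it is the pair `{a, b}`.
    have hL : L ⊆ {a, b} := by
      rintro v ⟨hvQ, hvx : ⟪u, v⟫ = ⟪u, x⟫⟩
      have key := detv_mul_inner_eq (b - a) u (v - a) u
      rw [inner_sub_right, inner_sub_right, hbx, hvx, hax, sub_self, mul_zero, mul_zero,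
        add_zero] at key
      exact hgen.eq_or_eq_of_detv_eq_zero haQ hbQ hvQ hba.symm
        ((mul_eq_zero.1 key).resolve_right hu₀.ne')
    have hxab : x ∈ segment ℝ a b := by rw [← convexHull_pair]; exact convexHull_mono hL hxL
    have hdet : detv (b - a) u ≠ 0 := by
      intro h
      have key := inner_mul_inner_self_eq (b - a) (b - a) u
      have hbau : ⟪u, b - a⟫ = 0 := by rw [inner_sub_right, hbx, sub_self]
      rw [hbau, detv_comm, h] at key
      have hba₀ : 0 < ⟪b - a, b - a⟫ := real_inner_self_pos.2 (sub_ne_zero.2 hba)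
      nlinarith
    rcases hdet.lt_or_gt with hneg | hpos
    · refine ⟨b, a, isHullEdge_of_inner_eq hbQ haQ hba (hbx ▸ hsupp) hbx.symm ?_,
        segment_symm ℝ a b ▸ hxab, ?_⟩ <;> rw [detv_sub_comm] <;> linarith
    · exact ⟨a, b, isHullEdge_of_inner_eq haQ hbQ hba.symm hsupp hbx hpos, hxab, hpos.le⟩
  · push Not at hpair
    have hxa : x = a := by
      have hL : L ⊆ {a} := fun v hv => hpair v hv
      simpa using convexHull_mono hL hxL
    subst hxa
    refine exists_isHullEdge_of_vertex hQ hQnt haQ fun v hv hvx => ?_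
    rw [inner_sub_right, sub_neg]
    exact (hsupp v hv).lt_of_ne fun h => hvx (hpair v ⟨hv, h⟩)

lemma exists_isHullEdge {Q : Set Pt} (hQ : Q.Finite) (hQnt : Q.Nontrivial)
    (hgen : NoThreeCollinear Q) : ∃ A B, IsHullEdge Q A B := by
  obtain ⟨a, ha, b, hb, hab⟩ := hQnt
  obtain ⟨x, hx, hxmax⟩ := Set.exists_max_image Q (fun v => ⟪b - a, v⟫) hQ ⟨a, ha⟩
  obtain ⟨A, B, hAB, -⟩ := exists_isHullEdge_of_supporting hQ ⟨a, ha, b, hb, hab⟩ hgen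
    (subset_convexHull ℝ Q hx) (sub_ne_zero.2 hab.symm) hxmax
  exact ⟨A, B, hAB⟩

lemma mem_convexHull_insert_of_inner_neg {Q : Set Pt} {A B q y : Pt} (hQ : Q.Finite)
    (hgen : NoThreeCollinear Q) (hA : A ∈ Q) (hB : B ∈ Q) (hAB : A ≠ B)
    (hy : y ∈ convexHull ℝ Q)
    (hside : ∀ z ∈ convexHull ℝ Q, detv (B - A) (q - A) * detv (B - A) (z - A) ≤ 0)
    (hqy : dist q y < dist q A) (hq : ⟪B - A, q - A⟫ < 0) :
    A ∈ convexHull ℝ (insert q (Q \ {A})) := by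
  set d := B - A
  have hd : 0 < ⟪d, d⟫ := real_inner_self_pos.2 (sub_ne_zero.2 hAB.symm)
  have hqy' : 0 < ⟪q - A, y - A⟫ := by
    have h := norm_sub_sq_real (q - A) (y - A)
    rw [sub_sub_sub_cancel_right, ← dist_eq_norm, ← dist_eq_norm] at h
    nlinarith [dist_nonneg (x := q) (y := y), sq_nonneg ‖y - A‖]
  have hyd : ⟪d, y - A⟫ < 0 := by
    have key := inner_mul_inner_self_eq (q - A) (y - A) d
    nlinarith [hside y hy]
  -- A vertex of `Q` furthest in the direction of `A - B` lies behind `A`, off the line `AB`.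
  obtain ⟨c, hc, hcmin⟩ := Set.exists_min_image Q (fun v => ⟪d, v⟫) hQ ⟨A, hA⟩
  obtain ⟨v, hv, hvy⟩ :=
    ((innerₗ Pt d).concaveOn convex_univ).exists_le_of_mem_convexHull (subset_univ _) hy
  have hcd : ⟪d, c - A⟫ < 0 := by
    simp only [innerₗ_apply_apply] at hvy
    rw [inner_sub_right] at hyd ⊢
    linarith [hcmin v hv]
  have hcA : c ≠ A := by rintro rfl; simp at hcd
  have hcB : c ≠ B := by rintro rfl; exact hd.not_gt hcd
  have hc₀ : detv d (c - A) ≠ 0 := fun h =>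
    (hgen.eq_or_eq_of_detv_eq_zero hA hB hc hAB h).elim hcA hcB
  refine convexHull_mono ?_ (mem_convexHull_of_inner_neg hq hcd
    (hside c (subset_convexHull ℝ Q hc)) hc₀)
  rintro v (rfl | rfl | rfl)
  · exact mem_insert _ _
  · exact mem_insert_of_mem _ ⟨hB, hAB.symm⟩
  · exact mem_insert_of_mem _ ⟨hc, hcA⟩

namespace IsHullEdge

variable {Q : Set Pt} {A B : Pt}

lemma detv_nonpos_of_mem_convexHull (h : IsHullEdge Q A B) {z : Pt}
    (hz : z ∈ convexHull ℝ Q) : detv (B - A) (z - A) ≤ 0 := by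
  obtain ⟨v, hv, hzv⟩ :=
    ((detvRight (B - A)).convexOn convex_univ).exists_ge_of_mem_convexHull (subset_univ _) hz
  have := h.2.2.2 v hv
  simp only [detvRight_apply, detv_sub_right] at hzv this ⊢
  linarith

lemma mem_segment_of_mem_convexHull (h : IsHullEdge Q A B) (hgen : NoThreeCollinear Q)
    {z : Pt} (hz : z ∈ convexHull ℝ Q) (hleft : 0 ≤ detv (B - A) (z - A)) :
    z ∈ segment ℝ A B := by
  have hzK := h.detv_nonpos_of_mem_convexHull hz
  obtain ⟨hA, hB, hAB, hright⟩ := h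
  have hface : ∀ v ∈ Q, detvRight (B - A) v ≤ detv (B - A) A := fun v hv => by
    simpa [detv_sub_right] using hright v hv
  have hzA : detvRight (B - A) z = detv (B - A) A := by
    simp only [detvRight_apply]
    rw [detv_sub_right] at hleft hzK
    linarith
  have hsub : Q ∩ {v | detvRight (B - A) v = detv (B - A) A} ⊆ {A, B} := by
    rintro v ⟨hv, hvA⟩
    change detv (B - A) v = detv (B - A) A at hvA
    rw [← sub_eq_zero, ← detv_sub_right] at hvA
    exact hgen.eq_or_eq_of_detv_eq_zero hA hB hv hAB hvA
  rw [← convexHull_pair]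
  exact convexHull_mono hsub (mem_convexHull_inter_of_apply_eq _ hface hz hzA)

lemma infDist_segment_le (h : IsHullEdge Q A B) (hQ : Q.Finite) (hgen : NoThreeCollinear Q)
    {q : Pt} {ε : ℝ} (hleft : 0 ≤ detv (B - A) (q - A))
    (hqε : infDist q (convexHull ℝ Q) ≤ ε)
    (hexch : q ∉ convexHull ℝ Q → ∀ v ∈ Q, v ∉ convexHull ℝ (insert q (Q \ {v}))) :
    infDist q (segment ℝ A B) ≤ ε := by
  by_cases hqK : q ∈ convexHull ℝ Q
  · rw [infDist_zero_of_mem (h.mem_segment_of_mem_convexHull hgen hqK hleft)]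
    exact infDist_nonneg.trans hqε
  have hside : ∀ z ∈ convexHull ℝ Q, detv (B - A) (q - A) * detv (B - A) (z - A) ≤ 0 :=
    fun z hz => mul_nonpos_of_nonneg_of_nonpos hleft (h.detv_nonpos_of_mem_convexHull hz)
  obtain ⟨hA, hB, hAB, -⟩ := h
  obtain ⟨y, hy, hqy⟩ :=
    (hQ.isCompact_convexHull ℝ).exists_infDist_eq_dist ⟨A, subset_convexHull ℝ Q hA⟩ q
  rw [hqy] at hqε
  by_contra! hfar
  have hcloser : ∀ z ∈ segment ℝ A B, dist q y < dist q z := fun z hz =>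
    hqε.trans_lt (hfar.trans_le (infDist_le_dist_of_mem hz))
  rcases lt_or_ge ⟪B - A, q - A⟫ 0 with hbehindA | hA'
  · exact hexch hqK A hA (mem_convexHull_insert_of_inner_neg hQ hgen hA hB hAB hy hside
      (hcloser A (left_mem_segment ℝ A B)) hbehindA)
  rcases lt_or_ge ⟪A - B, q - B⟫ 0 with hbehindB | hB'
  · refine hexch hqK B hB (mem_convexHull_insert_of_inner_neg hQ hgen hB hA hAB.symm hy
      (fun z hz => ?_) (hcloser B (right_mem_segment ℝ A B)) hbehindB)
    rw [detv_sub_sub_swap A B q, detv_sub_sub_swap A B z, neg_mul_neg]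
    exact hside z hz
  obtain ⟨z, hz, hzy⟩ := exists_mem_segment_dist_le hAB hA' hB' (hside y hy)
  exact (hcloser z hz).not_ge hzy

end IsHullEdge

section Cost

variable {Q P : Set Pt}

lemma cost_nonneg : 0 ≤ cost Q P :=
  Real.sSup_nonneg (by rintro _ ⟨p, -, rfl⟩; exact infDist_nonneg)

lemma infDist_le_cost (hP : P.Finite) {p : Pt} (hp : p ∈ P) :
    infDist p (convexHull ℝ Q) ≤ cost Q P :=
  le_csSup (hP.image _).bddAbove (mem_image_of_mem _ hp)

lemma exists_infDist_eq_cost (hP : P.Finite) (hPne : P.Nonempty) :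
    ∃ p ∈ P, infDist p (convexHull ℝ Q) = cost Q P :=
  (hPne.image _).csSup_mem (hP.image _)

lemma cost_le_cost (hP : P.Finite) (hQ : Q.Nonempty) {Q' : Set Pt}
    (h : convexHull ℝ Q ⊆ convexHull ℝ Q') : cost Q' P ≤ cost Q P :=
  Real.sSup_le (by
    rintro _ ⟨p, hp, rfl⟩
    exact (infDist_le_infDist_of_subset h (hQ.mono (subset_convexHull ℝ Q))).trans
      (infDist_le_cost hP hp)) cost_nonneg

lemma infDist_le_wgt (hP : P.Finite) {a b q : Pt} (hq : q ∈ P)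
    (hleft : 0 ≤ detv (b - a) (q - a)) : infDist q (segment ℝ a b) ≤ wgt P a b :=
  le_csSup ((hP.inter_of_left _).image _).bddAbove (mem_image_of_mem _ ⟨hq, hleft⟩)

lemma wgt_le {a b : Pt} {c : ℝ}
    (h : ∀ q ∈ P, 0 ≤ detv (b - a) (q - a) → infDist q (segment ℝ a b) ≤ c) (hc : 0 ≤ c) :
    wgt P a b ≤ c :=
  Real.sSup_le (by rintro _ ⟨q, ⟨hq, hleft⟩, rfl⟩; exact h q hq hleft) hc

end Cost

noncomputable def minCost (P : Set Pt) (k : ℕ) : ℝ :=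
  sInf {c : ℝ | ∃ Q : Set Pt, Q ⊆ P ∧ Q.Nonempty ∧ Q.ncard ≤ k ∧ c = cost Q P}

section MinCost

variable {Q P : Set Pt} {k : ℕ}

lemma minCost_le_cost (hQP : Q ⊆ P) (hQ : Q.Nonempty) (hQk : Q.ncard ≤ k) :
    minCost P k ≤ cost Q P :=
  csInf_le ⟨0, by rintro _ ⟨Q, -, -, -, rfl⟩; exact cost_nonneg⟩ ⟨Q, hQP, hQ, hQk, rfl⟩

lemma exists_cost_eq_minCost (hP : P.Finite) (hPne : P.Nonempty) (hk : 1 ≤ k) :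
    ∃ Q ⊆ P, Q.Nonempty ∧ Q.ncard ≤ k ∧ cost Q P = minCost P k := by
  obtain ⟨p, hp⟩ := hPne
  obtain ⟨Q, ⟨hQP, hQ, hQk⟩, hmin⟩ := Set.exists_min_image
    {Q | Q ⊆ P ∧ Q.Nonempty ∧ Q.ncard ≤ k} (cost · P) (hP.finite_subsets.subset fun Q h => h.1)
    ⟨{p}, singleton_subset_iff.2 hp, singleton_nonempty p, by rwa [ncard_singleton]⟩
  refine ⟨Q, hQP, hQ, hQk, le_antisymm (le_csInf ⟨_, Q, hQP, hQ, hQk, rfl⟩ ?_)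
    (minCost_le_cost hQP hQ hQk)⟩
  rintro _ ⟨Q', hQ'P, hQ', hQ'k, rfl⟩
  exact hmin Q' ⟨hQ'P, hQ', hQ'k⟩

lemma exists_minCost_exchange (hP : P.Finite) (hPne : P.Nonempty) (hk : 1 ≤ k) :
    ∃ Q ⊆ P, Q.Nonempty ∧ Q.ncard ≤ k ∧ cost Q P = minCost P k ∧
      ∀ q ∈ P, q ∉ convexHull ℝ Q → ∀ v ∈ Q, v ∉ convexHull ℝ (insert q (Q \ {v})) := by
  set G := {Q | Q ⊆ P ∧ Q.Nonempty ∧ Q.ncard ≤ k ∧ cost Q P = minCost P k}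
  have hG : G.Finite := hP.finite_subsets.subset fun Q h => h.1
  -- Among the optimal sets, take one whose hull covers the most points of `P`.
  obtain ⟨Q, ⟨hQP, hQ, hQk, hQcost⟩, hmax⟩ := Set.exists_max_image G
    (fun Q => (P ∩ convexHull ℝ Q).ncard) hG (exists_cost_eq_minCost hP hPne hk)
  refine ⟨Q, hQP, hQ, hQk, hQcost, fun q hq hqK v hv hvQ' => ?_⟩
  have hqQ : q ∉ Q := fun h => hqK (subset_convexHull ℝ Q h)
  set Q' := insert q (Q \ {v})
  have hsub : convexHull ℝ Q ⊆ convexHull ℝ Q' := by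
    refine convexHull_min (fun w hw => ?_) (convex_convexHull ℝ Q')
    rcases eq_or_ne w v with rfl | hwv
    · exact hvQ'
    · exact subset_convexHull ℝ Q' (mem_insert_of_mem _ ⟨hw, hwv⟩)
  have hQ'k : Q'.ncard ≤ k := (ncard_exchange hqQ hv).trans_le hQk
  have hQ'P : Q' ⊆ P := insert_subset hq (sdiff_subset.trans hQP)
  have hQ'G : Q' ∈ G := ⟨hQ'P, insert_nonempty _ _, hQ'k,
    le_antisymm (hQcost ▸ cost_le_cost hP hQ hsub)
      (minCost_le_cost hQ'P (insert_nonempty _ _) hQ'k)⟩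
  have hmore : (P ∩ convexHull ℝ Q).ncard < (P ∩ convexHull ℝ Q').ncard :=
    ncard_lt_ncard ⟨inter_subset_inter_right _ hsub,
      fun h => hqK (h ⟨hq, subset_convexHull ℝ Q' (mem_insert q _)⟩).2⟩ (hP.inter_of_left _)
  exact (hmax Q' hQ'G).not_gt hmore

end MinCost

lemma exists_isHullEdge_le_infDist {Q P : Set Pt} (hP : P.Finite) (hQP : Q ⊆ P) (hQ : Q.Finite)
    (hQnt : Q.Nontrivial) (hgen : NoThreeCollinear Q) :
    ∃ A B, IsHullEdge Q A B ∧
      ∃ p ∈ P, 0 ≤ detv (B - A) (p - A) ∧ cost Q P ≤ infDist p (segment ℝ A B) := by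
  have hK : (convexHull ℝ Q).Nonempty := hQnt.nonempty.mono (subset_convexHull ℝ Q)
  obtain ⟨p, hp, hpQ⟩ := exists_infDist_eq_cost (Q := Q) hP (hQnt.nonempty.mono hQP)
  obtain ⟨x, hx, hpx⟩ := (hQ.isCompact_convexHull ℝ).exists_infDist_eq_dist hK p
  rcases eq_or_ne p x with rfl | hpx'
  · obtain ⟨A, B, hAB⟩ := exists_isHullEdge hQ hQnt hgen
    refine ⟨A, B, hAB, A, hQP hAB.1, by simp [detv], ?_⟩
    rw [← hpQ, hpx, dist_self]
    exact infDist_nonneg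
  -- The nearest point `x` of the hull lies on an edge that separates it from `p`.
  have hsupp := inner_sub_nonpos_of_infDist_eq (convex_convexHull ℝ Q) hx hpx
  obtain ⟨A, B, hAB, hxAB, hdet⟩ := exists_isHullEdge_of_supporting hQ hQnt hgen hx
    (sub_ne_zero.2 hpx') fun v hv => by
      simpa [inner_sub_right] using hsupp v (subset_convexHull ℝ Q hv)
  refine ⟨A, B, hAB, p, hp, ?_, ?_⟩
  · rw [show p - A = (x - A) + (p - x) by abel, detv_add_right,
      detv_sub_eq_zero_of_mem_segment hxAB, zero_add]
    exact hdet
  · rw [← hpQ]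
    exact infDist_le_infDist_of_subset (segment_subset_convexHull hAB.1 hAB.2.1)
      ⟨A, left_mem_segment ℝ A B⟩

theorem stmt_12 (P : Set Pt) (hPfin : P.Finite) (hPne : P.Nonempty)
    (hgen : ∀ x ∈ P, ∀ y ∈ P, ∀ z ∈ P, x ≠ y → x ≠ z → y ≠ z →
      ¬ Collinear ℝ ({x, y, z} : Set Pt))
    (k : ℕ) (hk : 2 ≤ k)
    (hone : ∀ q ∈ P,
      sInf { c : ℝ | ∃ Q : Set Pt, Q ⊆ P ∧ Q.Nonempty ∧ Q.ncard ≤ k ∧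
        c = cost Q P } < cost {q} P) :
    ∃ a ∈ P, ∃ b ∈ P, a ≠ b ∧
      sInf { c : ℝ | ∃ Q : Set Pt, Q ⊆ P ∧ Q.Nonempty ∧ Q.ncard ≤ k ∧
        c = cost Q P } = wgt P a b := by
  obtain ⟨Q, hQP, hQne, -, hQcost, hexch⟩ := exists_minCost_exchange hPfin hPne (k := k) (by omega)
  have hQ : Q.Finite := hPfin.subset hQP
  have hgenQ : NoThreeCollinear Q := NoThreeCollinear.mono hgen hQP
  have hQnt : Q.Nontrivial := by
    refine hQne.exists_eq_singleton_or_nontrivial.resolve_left ?_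
    rintro ⟨v, rfl⟩
    exact (hone v (hQP rfl)).ne' hQcost
  obtain ⟨A, B, hAB, p, hp, hpleft, hpfar⟩ :=
    exists_isHullEdge_le_infDist hPfin hQP hQ hQnt hgenQ
  refine ⟨A, hQP hAB.1, B, hQP hAB.2.1, hAB.2.2.1, (?_ : minCost P k = wgt P A B)⟩
  rw [← hQcost]
  refine le_antisymm (hpfar.trans (infDist_le_wgt hPfin hp hpleft)) (wgt_le ?_ cost_nonneg)
  exact fun q hq hleft =>
    hAB.infDist_segment_le hQ hgenQ hleft (infDist_le_cost hPfin hq) (hexch q hq)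
end

section
/- Let P ⊆ ℝ² be a finite set, let ε ≥ 0 and let k ≥ 2 be an integer. If there exists Q ⊆ P with 2 ≤ |Q| ≤ k and cost(Q,P) ≤ ε, then there exists Q' ⊆ P consisting only of extreme points of convexHull P (i.e., Q' ⊆ P ∩ extremePoints(convexHull P)) such that |Q'| ≤ 2k and cost(Q',P) ≤ ε. -/
open Set Metric

/-- Ray lemma: any point of the hull of a finite planar set `E` lies on a segment from a
given point `o` of the hull to a point in the hull of at most two elements of `E`. -/
lemma ray_lemma {E : Set Pt} (hE : E.Finite) {o x : Pt}
    (ho : o ∈ convexHull ℝ E) (hx : x ∈ convexHull ℝ E) (hxo : x ≠ o) :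
    ∃ a b : Pt, a ∈ E ∧ b ∈ E ∧
      ∃ t : ℝ, ∃ y : Pt, 0 < t ∧ t ≤ 1 ∧ y ∈ convexHull ℝ ({a, b} : Set Pt) ∧
        x = (1 - t) • o + t • y := by
  set C := convexHull ℝ E with hC
  set S : Set ℝ := {t : ℝ | 1 ≤ t ∧ o + t • (x - o) ∈ C} with hS
  have h1S : (1 : ℝ) ∈ S := ⟨le_refl 1, by simpa using hx⟩
  have hxo' : (0:ℝ) < ‖x - o‖ := by
    rw [norm_pos_iff]; exact sub_ne_zero.mpr hxo
  have hbdd : BddAbove S := by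
    obtain ⟨R, hR⟩ := ((hE.isCompact_convexHull ℝ).isBounded).exists_norm_le
    refine ⟨(R + ‖o‖) / ‖x - o‖, fun t ht => ?_⟩
    have ht0 : (0:ℝ) ≤ t := le_trans zero_le_one ht.1
    have : t * ‖x - o‖ ≤ R + ‖o‖ := by
      have h1 : ‖t • (x - o)‖ = t * ‖x - o‖ := by
        rw [norm_smul, Real.norm_eq_abs, abs_of_nonneg ht0]
      have h2 : ‖o + t • (x - o)‖ ≤ R := hR _ ht.2
      calc t * ‖x - o‖ = ‖(o + t • (x - o)) - o‖ := by rw [add_sub_cancel_left, h1]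
        _ ≤ ‖o + t • (x - o)‖ + ‖o‖ := norm_sub_le _ _
        _ ≤ R + ‖o‖ := by linarith
    exact (le_div_iff₀ hxo').mpr this
  have hclosed : IsClosed S := by
    have : S = Ici 1 ∩ (fun t : ℝ => o + t • (x - o)) ⁻¹' C := rfl
    rw [this]
    exact isClosed_Ici.inter ((hE.isClosed_convexHull ℝ).preimage (by fun_prop))
  set T := sSup S with hT
  have hTS : T ∈ S := hclosed.csSup_mem ⟨1, h1S⟩ hbdd
  have hT1 : 1 ≤ T := hTS.1
  set y := o + T • (x - o) with hy
  have hyC : y ∈ C := hTS.2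
  have hmax : ∀ s : ℝ, T < s → o + s • (x - o) ∉ C := by
    intro s hs hc
    exact absurd (le_csSup hbdd ⟨le_trans hT1 hs.le, hc⟩) (not_le.mpr hs)
  -- Carathéodory with positive weights
  obtain ⟨ι, _inst, z, w, hzE, hindep, hwpos, hwsum, hzy⟩ :=
    eq_pos_convex_span_of_mem_convexHull hyC
  have hcard3 : Fintype.card ι ≤ 3 := by
    have h1 := hindep.card_le_finrank_succ
    have h2 : Module.finrank ℝ (vectorSpan ℝ (Set.range z)) ≤ 2 := by
      have := Submodule.finrank_le (vectorSpan ℝ (Set.range z))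
      rwa [finrank_euclideanSpace_fin] at this
    omega
  have hne : Nonempty ι := by
    by_contra h
    rw [not_nonempty_iff] at h
    simp [Finset.univ_eq_empty] at hwsum
  -- main dichotomy
  have hcardne3 : Fintype.card ι ≠ 3 := by
    intro hc3
    have htop : affineSpan ℝ (Set.range z) = ⊤ := by
      rw [hindep.affineSpan_eq_top_iff_card_eq_finrank_add_one, hc3,
        finrank_euclideanSpace_fin]
    let b : AffineBasis ι ℝ Pt := ⟨z, hindep, htop⟩
    have hyint : y ∈ interior (convexHull ℝ (Set.range z)) := by
      have hrange : Set.range (b : ι → Pt) = Set.range z := rfl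
      rw [← hrange, b.interior_convexHull]
      intro i
      have hcomb : y = Finset.univ.affineCombination ℝ z w := by
        rw [Finset.affineCombination_eq_linear_combination _ _ _ hwsum]
        exact hzy.symm
      have : b.coord i y = w i := by
        rw [hcomb]
        exact b.coord_apply_combination_of_mem (Finset.mem_univ i) hwsum
      simpa [this] using hwpos i
    have hyint' : y ∈ interior C := interior_mono (convexHull_mono hzE) hyint
    obtain ⟨δ, hδ, hball⟩ := Metric.mem_nhds_iff.mp (mem_interior_iff_mem_nhds.mp hyint')
    set s := T + δ / (2 * ‖x - o‖) with hs
    have hsT : T < s := by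
      rw [hs]
      have : 0 < δ / (2 * ‖x - o‖) := by positivity
      linarith
    apply hmax s hsT
    apply hball
    have : o + s • (x - o) - y = (δ / (2 * ‖x - o‖)) • (x - o) := by
      rw [hy, hs]
      rw [add_smul]
      abel
    rw [Metric.mem_ball, dist_eq_norm, this, norm_smul, Real.norm_eq_abs,
      abs_of_nonneg (by positivity)]
    rw [div_mul_eq_mul_div, mul_comm]
    rw [div_lt_iff₀ (by positivity)]
    nlinarith
  have hcard2 : Fintype.card ι ≤ 2 := by omega
  -- extract at most two points
  obtain ⟨i0⟩ := hne
  have hab : ∃ a b : Pt, a ∈ E ∧ b ∈ E ∧ Set.range z ⊆ ({a, b} : Set Pt) := by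
    rcases Nat.lt_or_ge (Fintype.card ι) 2 with h | h
    · have h1 : Fintype.card ι = 1 := by
        have : 0 < Fintype.card ι := Fintype.card_pos_iff.mpr ⟨i0⟩
        omega
      refine ⟨z i0, z i0, hzE ⟨i0, rfl⟩, hzE ⟨i0, rfl⟩, ?_⟩
      rintro _ ⟨i, rfl⟩
      have : i = i0 := by
        have := Fintype.card_le_one_iff.mp (le_of_eq h1)
        exact this i i0
      simp [this]
    · have h2 : Fintype.card ι = 2 := le_antisymm hcard2 h
      obtain ⟨i1, hi1⟩ : ∃ i1 : ι, i1 ≠ i0 := by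
        by_contra h'
        push_neg at h'
        have : Fintype.card ι ≤ 1 := Fintype.card_le_one_iff.mpr fun a b => by
          rw [h' a, h' b]
        omega
      refine ⟨z i0, z i1, hzE ⟨i0, rfl⟩, hzE ⟨i1, rfl⟩, ?_⟩
      rintro _ ⟨i, rfl⟩
      rcases eq_or_ne i i0 with h | h
      · simp [h]
      rcases eq_or_ne i i1 with h' | h'
      · simp [h']
      exfalso
      classical
      have hc : ({i, i0, i1} : Finset ι).card = 3 := by
        rw [Finset.card_insert_of_notMem (by simp [h, h']),
          Finset.card_insert_of_notMem (by simp [hi1.symm])]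
        simp
      have := Finset.card_le_univ ({i, i0, i1} : Finset ι)
      rw [hc] at this
      rw [Fintype.card] at h2
      omega
  obtain ⟨a, b, haE, hbE, hzab⟩ := hab
  have hyrange : y ∈ convexHull ℝ (Set.range z) := by
    have := Finset.univ.centerMass_mem_convexHull (w := w) (z := z)
      (fun i _ => (hwpos i).le) (by rw [hwsum]; norm_num) (fun i _ => Set.mem_range_self i)
    rwa [Finset.centerMass, hwsum, inv_one, one_smul, hzy] at this
  have hyab : y ∈ convexHull ℝ ({a, b} : Set Pt) := convexHull_mono hzab hyrange
  have hT0 : T ≠ 0 := by linarith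
  refine ⟨a, b, haE, hbE, 1 / T, y, by positivity, by
    rw [div_le_one (by linarith)]; exact hT1, hyab, ?_⟩
  rw [hy]
  match_scalars <;> field_simp <;> ring

lemma hull_ext (P : Set Pt) (hP : P.Finite) :
    convexHull ℝ (P ∩ Set.extremePoints ℝ (convexHull ℝ P)) = convexHull ℝ P := by
  have hsub : Set.extremePoints ℝ (convexHull ℝ P) ⊆ P := extremePoints_convexHull_subset
  rw [Set.inter_eq_right.mpr hsub]
  refine le_antisymm (convexHull_mono hsub) ?_
  have hKM := closure_convexHull_extremePoints (hP.isCompact_convexHull ℝ) (convex_convexHull ℝ P)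
  have hfin : (Set.extremePoints ℝ (convexHull ℝ P)).Finite := hP.subset hsub
  have hcl : closure (convexHull ℝ (Set.extremePoints ℝ (convexHull ℝ P)))
      = convexHull ℝ (Set.extremePoints ℝ (convexHull ℝ P)) :=
    (hfin.isClosed_convexHull ℝ).closure_eq
  exact le_of_eq (hKM.symm.trans hcl)

theorem stmt_13 (P : Set Pt) (hPfin : P.Finite) (ε : ℝ) (hε : 0 ≤ ε)
    (k : ℕ) (hk : 2 ≤ k)
    (hex : ∃ Q : Set Pt, Q ⊆ P ∧ 2 ≤ Q.ncard ∧ Q.ncard ≤ k ∧ cost Q P ≤ ε) :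
    ∃ Q' : Set Pt, Q' ⊆ P ∩ Set.extremePoints ℝ (convexHull ℝ P) ∧
      Q'.Nonempty ∧ Q'.ncard ≤ 2 * k ∧ cost Q' P ≤ ε := by
  obtain ⟨Q, hQP, hQ2, hQk, hQcost⟩ := hex
  set E : Set Pt := P ∩ Set.extremePoints ℝ (convexHull ℝ P) with hEdef
  have hEfin : E.Finite := hPfin.subset Set.inter_subset_left
  have hEhull : convexHull ℝ E = convexHull ℝ P := hull_ext P hPfin
  have hQfin : Q.Finite := hPfin.subset hQP
  obtain ⟨q1, q2, hq1, hq2, hq12⟩ := (Set.one_lt_ncard_iff hQfin).mp (by omega)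
  have hQhullE : ∀ q ∈ Q, q ∈ convexHull ℝ E := fun q hq => by
    rw [hEhull]; exact subset_convexHull ℝ P (hQP hq)
  have hEne : E.Nonempty := by
    rw [← convexHull_nonempty_iff (𝕜 := ℝ), hEhull, convexHull_nonempty_iff]
    exact ⟨q1, hQP hq1⟩
  obtain ⟨e0, he0⟩ := hEne
  set o : Pt := (1/2 : ℝ) • q1 + (1/2 : ℝ) • q2 with hodef
  have hoE : o ∈ convexHull ℝ E := by
    rw [hEhull]
    exact (convex_convexHull ℝ P) (subset_convexHull ℝ P (hQP hq1))
      (subset_convexHull ℝ P (hQP hq2)) (by norm_num) (by norm_num) (by norm_num)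
  -- choice of two extreme points per element of Q
  have hch : ∀ q : Pt, ∃ a b : Pt, q ∈ Q → a ∈ E ∧ b ∈ E ∧
      ∃ t : ℝ, ∃ y : Pt, 0 ≤ t ∧ t ≤ 1 ∧ y ∈ convexHull ℝ ({a, b} : Set Pt) ∧
        q = (1 - t) • o + t • y ∧ (q ≠ o → 0 < t) := by
    intro q
    by_cases hq : q ∈ Q
    · by_cases hqo : q = o
      · exact ⟨e0, e0, fun _ => ⟨he0, he0, 0, e0, le_refl 0, zero_le_one,
          subset_convexHull ℝ _ (by simp), by simp [hqo], fun h => absurd hqo h⟩⟩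
      · obtain ⟨a, b, haE, hbE, t, y, ht0, ht1, hy, hxy⟩ :=
          ray_lemma hEfin hoE (hQhullE q hq) hqo
        exact ⟨a, b, fun _ => ⟨haE, hbE, t, y, ht0.le, ht1, hy, hxy, fun _ => ht0⟩⟩
    · exact ⟨e0, e0, fun h => absurd h hq⟩
  choose a b H using hch
  set X : Set Pt := a '' Q ∪ b '' Q with hXdef
  have hXE : X ⊆ E := by
    rintro x (⟨q, hq, rfl⟩ | ⟨q, hq, rfl⟩)
    · exact (H q hq).1
    · exact (H q hq).2.1
  -- o ∈ convexHull X
  have habX : ∀ q ∈ Q, convexHull ℝ ({a q, b q} : Set Pt) ⊆ convexHull ℝ X := by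
    intro q hq
    apply convexHull_mono
    rintro x (rfl | rfl)
    · exact Or.inl ⟨q, hq, rfl⟩
    · exact Or.inr ⟨q, hq, rfl⟩
  have hmid : ∀ u v : Pt, u = (1/2 : ℝ) • u + (1/2 : ℝ) • v → u = v := by
    intro u v h
    have h2 : (1/2 : ℝ) • (u - v) = 0 := by
      rw [show (1/2 : ℝ) • (u - v) = u - ((1/2 : ℝ) • u + (1/2 : ℝ) • v) by
        match_scalars <;> ring, ← h, sub_self]
    rcases smul_eq_zero.mp h2 with h3 | h3
    · norm_num at h3
    · exact sub_eq_zero.mp h3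
  have hq1o : q1 ≠ o := fun h => hq12 (hmid q1 q2 h)
  have hq2o : q2 ≠ o := by
    intro h
    refine hq12 (hmid q2 q1 ?_).symm
    rw [hodef] at h
    exact h.trans (add_comm _ _)
  obtain ⟨_, _, t1, y1, ht10, ht11, hy1, he1, hpos1⟩ := H q1 hq1
  obtain ⟨_, _, t2, y2, ht20, ht21, hy2, he2, hpos2⟩ := H q2 hq2
  have ht1p : 0 < t1 := hpos1 hq1o
  have ht2p : 0 < t2 := hpos2 hq2o
  have hy1X : y1 ∈ convexHull ℝ X := habX q1 hq1 hy1
  have hy2X : y2 ∈ convexHull ℝ X := habX q2 hq2 hy2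
  have hoX : o ∈ convexHull ℝ X := by
    have hsum : 0 < t1 + t2 := by linarith
    have hsumne : t1 + t2 ≠ 0 := ne_of_gt hsum
    have key : o = (t1 / (t1 + t2)) • y1 + (t2 / (t1 + t2)) • y2 := by
      have h' : o = (1/2 : ℝ) • ((1 - t1) • o + t1 • y1)
          + (1/2 : ℝ) • ((1 - t2) • o + t2 • y2) := by
        rw [← he1, ← he2]
      have e1 : ((t1 + t2)/2) • o = (t1/2) • y1 + (t2/2) • y2 := by
        linear_combination (norm := module) h'
      have h0 : o = (2/(t1 + t2)) • (((t1 + t2)/2) • o) := by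
        rw [smul_smul, show 2/(t1 + t2) * ((t1 + t2)/2) = 1 by field_simp, one_smul]
      rw [h0, e1]
      match_scalars <;> (field_simp; try ring)
    rw [key]
    exact (convex_convexHull ℝ X) hy1X hy2X (by positivity) (by positivity)
      (by field_simp)
  have hQsubX : convexHull ℝ Q ⊆ convexHull ℝ X := by
    apply convexHull_min _ (convex_convexHull ℝ X)
    intro q hq
    obtain ⟨_, _, t, y, ht0, ht1, hy, heq, _⟩ := H q hq
    have hyX : y ∈ convexHull ℝ X := habX q hq hy
    rw [heq]
    exact (convex_convexHull ℝ X) hoX hyX (by linarith) ht0 (by ring)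
  -- conclude
  refine ⟨X, hXE, ⟨a q1, Or.inl ⟨q1, hq1, rfl⟩⟩, ?_, ?_⟩
  · calc X.ncard ≤ (a '' Q).ncard + (b '' Q).ncard := Set.ncard_union_le _ _
      _ ≤ Q.ncard + Q.ncard := add_le_add (Set.ncard_image_le hQfin) (Set.ncard_image_le hQfin)
      _ ≤ 2 * k := by omega
  · rw [cost]
    apply Real.sSup_le _ hε
    rintro _ ⟨p, hpP, rfl⟩
    have h1 : infDist p (convexHull ℝ X) ≤ infDist p (convexHull ℝ Q) :=
      infDist_le_infDist_of_subset hQsubX ⟨q1, subset_convexHull ℝ Q hq1⟩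
    have h2 : infDist p (convexHull ℝ Q) ≤ cost Q P := by
      apply le_csSup ((hPfin.image _).bddAbove)
      exact ⟨p, hpP, rfl⟩
    linarith
end

section
/- Let P ⊆ ℝ² be a finite set in convex position and let a, b ∈ P be distinct. Then there do not exist points p, p' ∈ P with det(b−a, p−a) > 0, det(b−a, p'−a) < 0, ⟨b−a, p−a⟩ < 0, and ⟨b−a, p'−a⟩ < 0. (Equivalently: of the two open quarter-plane cones at a bounded by the line through a and b and its perpendicular at a, lying on the far side of a from b, at most one contains points of P; otherwise a would lie in the triangle with vertices p, p', b.) -/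
open Set
open scoped RealInnerProductSpace

/-- `P` is in convex position: no point of `P` is in the convex hull of the others. -/
def ConvexPosition (P : Set Pt) : Prop :=
  ∀ p ∈ P, p ∉ convexHull ℝ (P \ {p})

set_option maxHeartbeats 1000000 in
theorem stmt_15 (P : Set Pt) (hPfin : P.Finite) (hconv : ConvexPosition P)
    (a b : Pt) (ha : a ∈ P) (hb : b ∈ P) (hab : a ≠ b) :
    ¬ ∃ p ∈ P, ∃ p' ∈ P,
        0 < detv (b - a) (p - a) ∧ detv (b - a) (p' - a) < 0 ∧
        ⟪b - a, p - a⟫ < 0 ∧ ⟪b - a, p' - a⟫ < 0 := by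
  rintro ⟨p, hp, p', hp', hd1, hd2, hi1, hi2⟩
  set u0 := (b - a) 0 with hu0
  set u1 := (b - a) 1 with hu1
  set v0 := (p - a) 0 with hv0
  set v1 := (p - a) 1 with hv1
  set w0 := (p' - a) 0 with hw0
  set w1 := (p' - a) 1 with hw1
  have hd1' : 0 < u0 * v1 - u1 * v0 := hd1
  have hd2' : u0 * w1 - u1 * w0 < 0 := hd2
  have hinn1 : ⟪b - a, p - a⟫ = u0 * v0 + u1 * v1 := by
    simp [PiLp.inner_apply, Fin.sum_univ_two, hu0, hu1, hv0, hv1, mul_comm]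
  have hinn2 : ⟪b - a, p' - a⟫ = u0 * w0 + u1 * w1 := by
    simp [PiLp.inner_apply, Fin.sum_univ_two, hu0, hu1, hw0, hw1, mul_comm]
  have hi1' : u0 * v0 + u1 * v1 < 0 := hinn1 ▸ hi1
  have hi2' : u0 * w0 + u1 * w1 < 0 := hinn2 ▸ hi2
  set lam : ℝ := -(u0 * w1 - u1 * w0) with hlamdef
  set mu : ℝ := u0 * v1 - u1 * v0 with hmudef
  have hlam : 0 < lam := by linarith
  have hmu : 0 < mu := hd1'
  have hU : 0 < u0 ^ 2 + u1 ^ 2 := by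
    rcases eq_or_ne u0 0 with h0 | h0
    · rcases eq_or_ne u1 0 with h1 | h1
      · exfalso
        have : mu = 0 := by rw [hmudef, h0, h1]; ring
        linarith
      · positivity
    · positivity
  set nu : ℝ := -(lam * (u0 * v0 + u1 * v1) + mu * (u0 * w0 + u1 * w1)) / (u0 ^ 2 + u1 ^ 2)
    with hnudef
  have hnu : 0 < nu := by
    apply div_pos _ hU
    nlinarith [mul_pos hlam (neg_pos.mpr hi1'), mul_pos hmu (neg_pos.mpr hi2')]
  -- the key vector identity
  have hkey : lam • (p - a) + mu • (p' - a) + nu • (b - a) = 0 := by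
    refine PiLp.ext fun i => ?_
    fin_cases i
    · show lam * v0 + mu * w0 + nu * u0 = 0
      rw [hnudef, hlamdef, hmudef]
      field_simp
      ring
    · show lam * v1 + mu * w1 + nu * u1 = 0
      rw [hnudef, hlamdef, hmudef]
      field_simp
      ring
  have hpa : p ≠ a := by
    rintro rfl
    have hz0 : v0 = 0 := by simp [hv0]
    have hz1 : v1 = 0 := by simp [hv1]
    have : mu = 0 := by rw [hmudef, hz0, hz1]; ring
    linarith
  have hp'a : p' ≠ a := by
    rintro rfl
    have hz0 : w0 = 0 := by simp [hw0]
    have hz1 : w1 = 0 := by simp [hw1]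
    have : lam = 0 := by rw [hlamdef, hz0, hz1]; ring
    linarith
  have hsub : ∀ i : Fin 3, (![p, p', b] : Fin 3 → Pt) i ∈ P \ {a} := by
    intro i
    fin_cases i
    · exact ⟨hp, hpa⟩
    · exact ⟨hp', hp'a⟩
    · exact ⟨hb, fun h => hab (h : b = a).symm⟩
  set w : Fin 3 → ℝ := ![lam, mu, nu] with hwdef
  have hwpos : ∀ i ∈ (Finset.univ : Finset (Fin 3)), 0 ≤ w i := by
    intro i _
    fin_cases i
    · exact hlam.le
    · exact hmu.le
    · exact hnu.le
  have hsum : 0 < ∑ i : Fin 3, w i := by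
    simp [hwdef, Fin.sum_univ_three]
    linarith
  have hmem := Finset.centerMass_mem_convexHull (Finset.univ : Finset (Fin 3))
    hwpos hsum (fun i _ => hsub i)
  have hcm : (Finset.univ : Finset (Fin 3)).centerMass w ![p, p', b] = a := by
    rw [Finset.centerMass, Fin.sum_univ_three, Fin.sum_univ_three]
    have hprop : lam • p + mu • p' + nu • b = (lam + mu + nu) • a := by
      have := hkey
      simp only [smul_sub] at this
      rw [add_smul, add_smul]
      abel_nf
      abel_nf at this
      linear_combination (norm := module) this
    show (lam + mu + nu)⁻¹ • (lam • p + mu • p' + nu • b) = a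
    rw [hprop, smul_smul, inv_mul_cancel₀ (by linarith), one_smul]
  rw [hcm] at hmem
  exact hconv a ha hmem
end

section
/- Let a, b ∈ ℝ² be distinct and let S ⊆ ℝ² be finite and nonempty. Then max_{x ∈ S} dist(x, [a,b]) = max(A, B, L), where A := max{ dist(x,a) : x ∈ S, ⟨b−a, x−a⟩ ≤ 0 } (taken to be 0 if the set is empty), B := max{ dist(x,b) : x ∈ S, ⟨b−a, x−b⟩ ≥ 0 } (taken to be 0 if the set is empty), and L := max_{x ∈ S} dist(x, ℓ), with ℓ the affine line through a and b. -/
open Set Metric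
open scoped RealInnerProductSpace

private lemma le_infDist_aux {s : Set Pt} (hs : s.Nonempty) {x : Pt} {d : ℝ}
    (H : ∀ y ∈ s, d ≤ dist x y) : d ≤ infDist x s := by
  rw [infDist_eq_iInf]
  haveI := hs.to_subtype
  exact le_ciInf fun y => H y y.2

private lemma near_pt (a b x : Pt) (h : ⟪b - a, x - a⟫ ≤ 0) :
    dist x a ≤ infDist x (segment ℝ a b) := by
  refine le_infDist_aux ⟨a, left_mem_segment ℝ a b⟩ fun y hy => ?_
  rw [segment_eq_image'] at hy
  obtain ⟨t, ⟨ht0, _⟩, rfl⟩ := hy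
  rw [dist_eq_norm, dist_eq_norm]
  have he : x - (a + t • (b - a)) = (x - a) - t • (b - a) := by module
  rw [he]
  have h1 : ‖x - a‖ ^ 2 ≤ ‖(x - a) - t • (b - a)‖ ^ 2 := by
    have expand := norm_sub_sq_real (x - a) (t • (b - a))
    rw [real_inner_smul_right] at expand
    nlinarith [sq_nonneg ‖t • (b - a)‖, mul_nonneg ht0 (neg_nonneg.mpr h),
      real_inner_comm (x - a) (b - a)]
  nlinarith [norm_nonneg (x - a), norm_nonneg ((x - a) - t • (b - a))]

private lemma mid_pt (a b x : Pt) (hab : a ≠ b) (h1 : 0 < ⟪b - a, x - a⟫)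
    (h2 : ⟪b - a, x - b⟫ < 0) :
    infDist x (segment ℝ a b) ≤ infDist x (affineSpan ℝ {a, b} : Set Pt) := by
  set v := b - a with hv
  have hvne : v ≠ 0 := sub_ne_zero.mpr (Ne.symm hab)
  have hvn : ‖v‖ ≠ 0 := norm_ne_zero_iff.mpr hvne
  have hvpos : (0:ℝ) < ‖v‖ ^ 2 := by positivity
  set t : ℝ := ⟪v, x - a⟫ / ‖v‖ ^ 2 with hT
  set p := a + t • v with hp
  have hperp : ⟪v, x - p⟫ = 0 := by
    have : x - p = (x - a) - t • v := by rw [hp]; module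
    rw [this, inner_sub_right, real_inner_smul_right, real_inner_self_eq_norm_sq, hT]
    field_simp
    ring
  have ht0 : 0 < t := div_pos h1 hvpos
  have ht1 : t < 1 := by
    have hxb : ⟪v, x - b⟫ = ⟪v, x - a⟫ - ‖v‖ ^ 2 := by
      have : x - b = (x - a) - v := by rw [hv]; module
      rw [this, inner_sub_right, real_inner_self_eq_norm_sq]
    rw [hT, div_lt_one hvpos]
    nlinarith
  have hpseg : p ∈ segment ℝ a b := by
    rw [segment_eq_image']
    exact ⟨t, ⟨ht0.le, ht1.le⟩, rfl⟩
  refine le_trans (infDist_le_dist_of_mem hpseg) ?_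
  refine le_infDist_aux ⟨a, mem_affineSpan ℝ (by simp)⟩ fun y hy => ?_
  have hy' : y - a ∈ vectorSpan ℝ ({a, b} : Set Pt) := by
    have := AffineSubspace.vsub_mem_direction hy (mem_affineSpan ℝ (show a ∈ ({a,b}:Set Pt) by simp))
    rwa [direction_affineSpan] at this
  obtain ⟨s, hs⟩ := mem_vectorSpan_pair_rev.mp hy'
  have hs2 : y - a = s • v := by rw [← hs, vsub_eq_sub, hv]
  have hyeq : y = a + s • v := sub_eq_iff_eq_add'.mp hs2
  rw [dist_eq_norm, dist_eq_norm, hyeq]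
  have he : x - (a + s • v) = (x - p) + (t - s) • v := by rw [hp]; module
  rw [he]
  have h1 : ‖x - p‖ ^ 2 ≤ ‖(x - p) + (t - s) • v‖ ^ 2 := by
    rw [norm_add_sq_real, real_inner_smul_right, real_inner_comm, hperp]
    nlinarith [sq_nonneg ((t - s) * ‖v‖), norm_smul ((t-s)) v, sq_nonneg (norm ((t-s) • v))]
  nlinarith [norm_nonneg (x - p), norm_nonneg ((x - p) + (t - s) • v)]

theorem stmt_16 (a b : Pt) (hab : a ≠ b) (S : Set Pt) (hSfin : S.Finite)
    (hSne : S.Nonempty) :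
    sSup ((fun x => Metric.infDist x (segment ℝ a b)) '' S) =
      max (max
        (sSup ((fun x => dist x a) '' {x ∈ S | ⟪b - a, x - a⟫ ≤ 0}))
        (sSup ((fun x => dist x b) '' {x ∈ S | 0 ≤ ⟪b - a, x - b⟫})))
        (sSup ((fun x => Metric.infDist x (affineSpan ℝ {a, b} : Set Pt)) '' S)) := by
  set f := fun x => Metric.infDist x (segment ℝ a b) with hf
  have hbddL : BddAbove (f '' S) := (hSfin.image f).bddAbove
  have hneL : (f '' S).Nonempty := hSne.image f
  -- segment inside the line
  have hsub : segment ℝ a b ⊆ (affineSpan ℝ {a, b} : Set Pt) :=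
    (AffineSubspace.convex _).segment_subset
      (mem_affineSpan ℝ (by simp)) (mem_affineSpan ℝ (by simp))
  -- near b lemma via symmetry
  have near_b : ∀ x : Pt, 0 ≤ ⟪b - a, x - b⟫ → dist x b ≤ f x := by
    intro x hx
    have h' : ⟪a - b, x - b⟫ ≤ 0 := by
      have : a - b = -(b - a) := by module
      rw [this, inner_neg_left]; linarith
    have := near_pt b a x h'
    rwa [segment_symm] at this
  -- LHS ≥ 0 somewhere
  obtain ⟨x0, hx0⟩ := id hSne
  have hLHS0 : 0 ≤ sSup (f '' S) :=
    le_trans infDist_nonneg (le_csSup hbddL ⟨x0, hx0, rfl⟩)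
  apply le_antisymm
  · refine csSup_le hneL ?_
    rintro _ ⟨x, hx, rfl⟩
    by_cases h1 : ⟪b - a, x - a⟫ ≤ 0
    · refine le_trans (infDist_le_dist_of_mem (left_mem_segment ℝ a b)) ?_
      refine le_trans (le_csSup ((hSfin.sep _).image _).bddAbove
        (show dist x a ∈ (fun x => dist x a) '' {x ∈ S | ⟪b - a, x - a⟫ ≤ 0} from
          mem_image_of_mem _ ⟨hx, h1⟩)) ?_
      exact le_trans (le_max_left _ _) (le_max_left _ _)
    · by_cases h2 : 0 ≤ ⟪b - a, x - b⟫
      · refine le_trans (infDist_le_dist_of_mem (right_mem_segment ℝ a b)) ?_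
        refine le_trans (le_csSup ((hSfin.sep _).image _).bddAbove
          (show dist x b ∈ (fun x => dist x b) '' {x ∈ S | 0 ≤ ⟪b - a, x - b⟫} from
            mem_image_of_mem _ ⟨hx, h2⟩)) ?_
        exact le_trans (le_max_right _ _) (le_max_left _ _)
      · push_neg at h1 h2
        refine le_trans (mid_pt a b x hab h1 h2) (le_trans (le_csSup
          ((hSfin.image _).bddAbove) ⟨x, hx, rfl⟩) (le_max_right _ _))
  · refine max_le (max_le ?_ ?_) ?_
    · rcases eq_empty_or_nonempty {x ∈ S | ⟪b - a, x - a⟫ ≤ 0} with he | hne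
      · rw [he, image_empty, Real.sSup_empty]; exact hLHS0
      · refine csSup_le (hne.image _) ?_
        rintro _ ⟨x, ⟨hx, hcond⟩, rfl⟩
        exact le_trans (near_pt a b x hcond) (le_csSup hbddL ⟨x, hx, rfl⟩)
    · rcases eq_empty_or_nonempty {x ∈ S | 0 ≤ ⟪b - a, x - b⟫} with he | hne
      · rw [he, image_empty, Real.sSup_empty]; exact hLHS0
      · refine csSup_le (hne.image _) ?_
        rintro _ ⟨x, ⟨hx, hcond⟩, rfl⟩
        exact le_trans (near_b x hcond) (le_csSup hbddL ⟨x, hx, rfl⟩)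
    · refine csSup_le (Set.Nonempty.image _ hSne) ?_
      rintro _ ⟨x, hx, rfl⟩
      refine le_trans (infDist_le_infDist_of_subset hsub ⟨a, left_mem_segment ℝ a b⟩) ?_
      exact le_csSup hbddL ⟨x, hx, rfl⟩
end

section
/- Fix integers n ≥ 2 and N with 1 ≤ N ≤ n², a real c ≥ 1, an injective map v : Fin N → ℝ, and ε ∈ ℝ. Draw a sample s = (s₁, …, s_{4n}) of 4n indices independently and uniformly at random from Fin N, and define β(s) ∈ ℝ ∪ {+∞} as the minimum of { v(s_t) : 1 ≤ t ≤ 4n, v(s_t) ≥ ε } (equal to +∞ if this set is empty). Then the probability that the number of indices t ∈ Fin N with ε < v(t) ≤ β(s) exceeds (c/2)·n·ln n + 1 is at most n^{−2c}. -/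
/-!
Let `f = ⌈(c/2) n ln n⌉`. If fewer than `f` values exceed `ε` the event is empty; otherwise let
`F` be the `f` indices with the smallest values above `ε`. If some sample lands in `F`, then
`β(s)` is at most a value in `F`, so at most `f` indices are counted.
Hence the event forces all `4n` samples to avoid `F`, which has probability
`(1 - f/N)^{4n} ≤ exp(-4nf/N) ≤ exp(-4f/n) ≤ n^{-2c}` because `N ≤ n²`.
-/

open MeasureTheory Finset

theorem Finset.exists_initialSegment_card_eq {α β : Type*} [LinearOrder β] {v : α → β}
    {K : Finset α} (hv : Set.InjOn v K) {f : ℕ} (hf : f ≤ #K) :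
    ∃ F ⊆ K, #F = f ∧ ∀ a ∈ F, ∀ b ∈ K, v b ≤ v a → b ∈ F := by
  classical
  induction f with
  | zero => exact ⟨∅, empty_subset K, rfl, by simp⟩
  | succ f ih =>
    obtain ⟨F, hFK, hFcard, hF⟩ := ih (Nat.le_of_succ_le hf)
    have hne : (K \ F).Nonempty := by
      rw [← card_pos, card_sdiff_of_subset hFK]
      omega
    obtain ⟨m, hm, hmin⟩ := exists_min_image (K \ F) v hne
    obtain ⟨hmK, hmF⟩ := mem_sdiff.1 hm
    refine ⟨insert m F, insert_subset hmK hFK, by rw [card_insert_of_notMem hmF, hFcard], ?_⟩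
    intro a ha b hb hba
    rcases mem_insert.1 ha with rfl | ha
    · by_cases hbF : b ∈ F
      · exact mem_insert_of_mem hbF
      · have hab : v a = v b := le_antisymm (hmin b (mem_sdiff.2 ⟨hb, hbF⟩)) hba
        exact hv hmK hb hab ▸ mem_insert_self a F
    · exact mem_insert_of_mem (hF a ha b hb hba)

theorem measure_pi_uniformOfFintype_forall_notMem_le {α ι : Type*} [Fintype α] [Nonempty α]
    [MeasurableSpace α] [MeasurableSingletonClass α] [Fintype ι] (F : Finset α) :
    Measure.pi (fun _ : ι => (PMF.uniformOfFintype α).toMeasure) {s | ∀ i, s i ∉ F} ≤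
      ENNReal.ofReal (Real.exp (-(Fintype.card ι * (#F / Fintype.card α : ℝ)))) := by
  classical
  set p : ℝ := #F / Fintype.card α
  have hα : (0 : ℝ) < Fintype.card α := mod_cast Fintype.card_pos
  have hp : 1 - p = (#Fᶜ : ℝ) / Fintype.card α := by
    rw [card_compl, Nat.cast_sub (card_le_univ F), sub_div, div_self hα.ne']
  have hp0 : 0 ≤ 1 - p := hp ▸ by positivity
  have hcompl : (PMF.uniformOfFintype α).toMeasure ↑Fᶜ = ENNReal.ofReal (1 - p) := by
    rw [PMF.toMeasure_uniformOfFintype_apply _ (Finset.measurableSet _)]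
    simp only [Finset.coe_sort_coe, Fintype.card_coe]
    rw [hp, ENNReal.ofReal_div_of_pos hα, ENNReal.ofReal_natCast, ENNReal.ofReal_natCast]
  have hset : {s : ι → α | ∀ i, s i ∉ F} = Set.univ.pi fun _ => ↑Fᶜ := by
    ext s
    simp
  rw [hset, Measure.pi_pi, prod_const, card_univ, hcompl, ← ENNReal.ofReal_pow hp0]
  refine ENNReal.ofReal_le_ofReal ?_
  calc (1 - p) ^ Fintype.card ι ≤ Real.exp (-p) ^ Fintype.card ι :=
        pow_le_pow_left₀ hp0 (Real.one_sub_le_exp_neg p) _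
    _ = Real.exp (-(Fintype.card ι * p)) := by rw [← Real.exp_nat_mul, mul_neg]

theorem Real.exp_neg_four_mul_div_le_rpow {n N f c : ℝ} (hn : 0 < n) (hN : 0 < N)
    (hNn : N ≤ n ^ 2) (hf0 : 0 ≤ f) (hf : c / 2 * n * Real.log n ≤ f) :
    Real.exp (-(4 * n * (f / N))) ≤ n ^ (-(2 * c)) := by
  rw [Real.rpow_def_of_pos hn, Real.exp_le_exp, mul_neg, neg_le_neg_iff]
  calc Real.log n * (2 * c) ≤ 4 * n * (f / n ^ 2) := by
        rw [mul_div_assoc', le_div_iff₀ (by positivity)]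
        nlinarith
    _ ≤ 4 * n * (f / N) := by gcongr

/-- The number of `t` with `ε < v t ≤ β(s)`, where `β(s)` is the least sampled value `≥ ε`
(`+∞` if there is none). -/
noncomputable def bracketCount {α ι β : Type*} [LinearOrder β] (v : α → β) (ε : β)
    (s : ι → α) : ℕ :=
  Nat.card {t : α // ε < v t ∧ ∀ u, ε ≤ v (s u) → v t ≤ v (s u)}

section bracketCount

variable {α ι β : Type*} [Fintype α] [LinearOrder β] {v : α → β} {ε : β} {s : ι → α}

theorem bracketCount_le_card {G : Finset α}
    (hG : ∀ t, ε < v t → (∀ u, ε ≤ v (s u) → v t ≤ v (s u)) → t ∈ G) :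
    bracketCount v ε s ≤ #G := by
  classical
  rw [bracketCount, Nat.card_eq_fintype_card, Fintype.card_subtype]
  exact card_le_card fun t ht => hG t (mem_filter.1 ht).2.1 (mem_filter.1 ht).2.2

theorem bracketCount_le_card_of_mem {F : Finset α} (hFε : ∀ a ∈ F, ε < v a)
    (hF : ∀ a ∈ F, ∀ b, ε < v b → v b ≤ v a → b ∈ F) {u : ι} (hu : s u ∈ F) :
    bracketCount v ε s ≤ #F :=
  bracketCount_le_card fun t ht hts => hF _ hu t ht (hts u (hFε _ hu).le)

end bracketCount

theorem stmt_17 (n N : ℕ) (hn : 2 ≤ n) (hN1 : 1 ≤ N) (hN2 : N ≤ n ^ 2)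
    (c : ℝ) (hc : 1 ≤ c) (v : Fin N → ℝ) (hv : Function.Injective v) (ε : ℝ) :
    (MeasureTheory.Measure.pi fun _ : Fin (4 * n) =>
        (@PMF.uniformOfFintype (Fin N) _ ⟨⟨0, by omega⟩⟩).toMeasure)
      {s : Fin (4 * n) → Fin N |
        (c / 2) * n * Real.log n + 1 <
          (Nat.card {t : Fin N // ε < v t ∧
            ∀ u : Fin (4 * n), ε ≤ v (s u) → v t ≤ v (s u)} : ℝ)} ≤
      ENNReal.ofReal ((n : ℝ) ^ (-(2 * c))) := by
  classical
  change Measure.pi _ {s | _ < (bracketCount v ε s : ℝ)} ≤ _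
  set x : ℝ := c / 2 * n * Real.log n
  have hx : 0 ≤ x := by
    have : 0 ≤ Real.log n := Real.log_nonneg (by norm_cast; omega)
    positivity
  set K : Finset (Fin N) := {t | ε < v t}
  by_cases hK : #K < ⌈x⌉₊
  · refine (measure_mono (t := ∅) fun s (hs : x + 1 < _) => hs.not_ge ?_).trans (by simp)
    calc (bracketCount v ε s : ℝ) ≤ #K :=
          mod_cast bracketCount_le_card fun t ht _ => by simpa [K]
      _ ≤ x + 1 := by linarith [Nat.lt_ceil.1 hK]
  obtain ⟨F, hFK, hFcard, hF⟩ := exists_initialSegment_card_eq hv.injOn (not_lt.1 hK)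
  have hsub : {s | x + 1 < (bracketCount v ε s : ℝ)} ⊆
      {s : Fin (4 * n) → Fin N | ∀ u, s u ∉ F} :=
    fun s (hs : x + 1 < _) u hu => hs.not_ge <| by
      calc (bracketCount v ε s : ℝ) ≤ #F := by
            exact_mod_cast bracketCount_le_card_of_mem (fun a ha => by simpa [K] using hFK ha)
              (fun a ha b hb hba => hF a ha b (by simpa [K]) hba) hu
        _ ≤ x + 1 := by rw [hFcard]; exact (Nat.ceil_lt_add_one hx).le
  have : Nonempty (Fin N) := ⟨⟨0, by omega⟩⟩
  refine (measure_mono hsub).trans ((measure_pi_uniformOfFintype_forall_notMem_le F).trans ?_)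
  refine ENNReal.ofReal_le_ofReal ?_
  simp only [Fintype.card_fin, Nat.cast_mul, Nat.cast_ofNat, hFcard]
  exact Real.exp_neg_four_mul_div_le_rpow (by positivity) (by positivity) (by exact_mod_cast hN2)
    (by positivity) (Nat.le_ceil x)
end
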